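/- Let K be a field with char(K) = 0 or char(K) > n, let 1 ≤ d ≤ n, and N ≥ n+d. Then in K[x_1,...,x_N], the ideal generated by the S_N-orbit of e_d(x_1,...,x_n) equals the ideal generated by the S_N-orbit of the monomial x_1 x_2 ··· x_d. -/

import Mathlib

open MvPolynomial

/-- The elementary symmetric polynomial of degree `d` in the variables indexed by `S`. -/
noncomputable def esymmOn (K : Type*) [Field K] {N : ℕ} (S : Finset (Fin N)) (d : ℕ) :
    MvPolynomial (Fin N) K :=
  ∑ T ∈ Finset.powersetCard d S, ∏ i ∈ T, X i

/-- The ideal generated by the `S_N`-orbit of `f`. -/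
noncomputable def symOrbitIdeal {K : Type*} [Field K] {N : ℕ} (f : MvPolynomial (Fin N) K) :
    Ideal (MvPolynomial (Fin N) K) :=
  Ideal.span {g | ∃ σ : Equiv.Perm (Fin N), g = rename σ f}

/-!
Every monomial of `e_d` is a permuted `x_1 ⋯ x_d`, which gives `⊆`. For `⊇`, averaging over
deletions gives `∑_{u ∈ S} e_d(S ∖ u) = (|S| - d) e_d(S)`, and `1 ≤ |S| - d ≤ n` is invertible
in `K` while `n < |S| ≤ n + d`; so the orbit ideal of `e_d(x_1, …, x_n)` contains `e_d(S)` for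
every `S` with `n ≤ |S| ≤ n + d`. Then `e_{k+1}(S ∪ {a}) - e_{k+1}(S) = x_a e_k(S)` trades one
variable of the symmetric part for one variable of a monomial factor at a time, ending at
`x_1 ⋯ x_d · e_0(S) = x_1 ⋯ x_d`.
-/

open Finset

lemma natCast_ne_zero_of_ringChar {R : Type*} [NonAssocRing R] {m : ℕ} (hm : 0 < m)
    (hchar : ringChar R = 0 ∨ m < ringChar R) : (m : R) ≠ 0 := fun h => by
  have hdvd := (ringChar.spec R m).1 h
  rcases hchar with h0 | hlt
  · rw [h0, zero_dvd_iff] at hdvd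
    omega
  · exact absurd (Nat.le_of_dvd hm hdvd) (by omega)

section OrbitIdeal

variable {K : Type*} [Field K] {N : ℕ}

lemma rename_mem_symOrbitIdeal (σ : Equiv.Perm (Fin N)) (f : MvPolynomial (Fin N) K) :
    rename σ f ∈ symOrbitIdeal f :=
  Ideal.subset_span ⟨σ, rfl⟩

lemma rename_mem_symOrbitIdeal_of_mem {f g : MvPolynomial (Fin N) K} (hg : g ∈ symOrbitIdeal f)
    (σ : Equiv.Perm (Fin N)) : rename σ g ∈ symOrbitIdeal f := by
  have hmap : (symOrbitIdeal f).map (rename σ) ≤ symOrbitIdeal f := by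
    rw [symOrbitIdeal, Ideal.map_span, Ideal.span_le]
    rintro _ ⟨_, ⟨τ, rfl⟩, rfl⟩
    rw [rename_rename]
    exact rename_mem_symOrbitIdeal (τ.trans σ) f
  exact hmap (Ideal.mem_map_of_mem _ hg)

lemma symOrbitIdeal_le_iff {f g : MvPolynomial (Fin N) K} :
    symOrbitIdeal f ≤ symOrbitIdeal g ↔ f ∈ symOrbitIdeal g := by
  refine ⟨fun h => h (by simpa using rename_mem_symOrbitIdeal 1 f), fun hf => ?_⟩
  rw [symOrbitIdeal, Ideal.span_le]
  rintro _ ⟨σ, rfl⟩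
  exact rename_mem_symOrbitIdeal_of_mem hf σ

lemma rename_prod_X (σ : Equiv.Perm (Fin N)) (S : Finset (Fin N)) :
    rename σ (∏ i ∈ S, X i : MvPolynomial (Fin N) K) = ∏ i ∈ S.map σ.toEmbedding, X i := by
  simp [map_prod]

lemma prod_X_mem_symOrbitIdeal {S T : Finset (Fin N)} (h : #S = #T) :
    (∏ i ∈ T, X i : MvPolynomial (Fin N) K) ∈ symOrbitIdeal (∏ i ∈ S, X i) := by
  obtain ⟨σ, rfl⟩ := Equiv.Perm.exists_map_finset_eq S T h
  rw [← rename_prod_X]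
  exact rename_mem_symOrbitIdeal σ _

end OrbitIdeal

section EsymmOn

variable {K : Type*} [Field K] {N : ℕ}

lemma esymmOn_zero (S : Finset (Fin N)) : esymmOn K S 0 = 1 := by
  simp [esymmOn]

lemma rename_esymmOn (σ : Equiv.Perm (Fin N)) (S : Finset (Fin N)) (d : ℕ) :
    rename σ (esymmOn K S d) = esymmOn K (S.map σ.toEmbedding) d := by
  rw [esymmOn, map_sum, esymmOn, powersetCard_map, sum_map]
  exact sum_congr rfl fun T _ => rename_prod_X σ T

lemma esymmOn_mem_symOrbitIdeal {S T : Finset (Fin N)} (h : #S = #T) (d : ℕ) :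
    esymmOn K T d ∈ symOrbitIdeal (esymmOn K S d) := by
  obtain ⟨σ, rfl⟩ := Equiv.Perm.exists_map_finset_eq S T h
  rw [← rename_esymmOn]
  exact rename_mem_symOrbitIdeal σ _

lemma esymmOn_insert {a : Fin N} {S : Finset (Fin N)} (ha : a ∉ S) (k : ℕ) :
    esymmOn K (insert a S) (k + 1) = esymmOn K S (k + 1) + X a * esymmOn K S k := by
  have hnot : ∀ T ∈ powersetCard k S, a ∉ T := fun T hT h => ha ((mem_powersetCard.1 hT).1 h)
  have hinj : Set.InjOn (insert a) (powersetCard k S : Set (Finset (Fin N))) :=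
    fun T hT U hU h => by
      rw [← erase_insert (hnot T hT), h, erase_insert (hnot U hU)]
  have hdisj : Disjoint (powersetCard (k + 1) S) ((powersetCard k S).image (insert a)) := by
    refine disjoint_left.2 fun T hT hT' => ?_
    obtain ⟨U, -, rfl⟩ := mem_image.1 hT'
    exact ha ((mem_powersetCard.1 hT).1 (mem_insert_self a U))
  rw [esymmOn, powersetCard_succ_insert ha, sum_union hdisj, sum_image hinj, esymmOn, esymmOn,
    mul_sum]
  congr 1
  exact sum_congr rfl fun T hT => prod_insert (hnot T hT)

lemma sum_esymmOn_erase (S : Finset (Fin N)) (d : ℕ) :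
    ∑ u ∈ S, esymmOn K (S.erase u) d = (#S - d) • esymmOn K S d := by
  have herase : ∀ u, powersetCard d (S.erase u) = {T ∈ powersetCard d S | u ∉ T} := by
    intro u
    ext T
    simp only [mem_powersetCard, mem_filter, subset_erase]
    tauto
  simp only [esymmOn, herase, sum_filter]
  rw [sum_comm, smul_sum]
  refine sum_congr rfl fun T hT => ?_
  obtain ⟨hTS, hTd⟩ := mem_powersetCard.1 hT
  rw [← sum_filter, sum_const, filter_notMem_eq_sdiff, card_sdiff_of_subset hTS, hTd]

end EsymmOn

section Membership

variable {K : Type*} [Field K] {N : ℕ} (I : Ideal (MvPolynomial (Fin N) K))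

lemma esymmOn_mem_of_forall_erase_mem {S : Finset (Fin N)} {d : ℕ}
    (hS : ((#S - d : ℕ) : K) ≠ 0) (h : ∀ u ∈ S, esymmOn K (S.erase u) d ∈ I) :
    esymmOn K S d ∈ I := by
  have hsum := I.sum_mem h
  rw [sum_esymmOn_erase, ← Nat.cast_smul_eq_nsmul K] at hsum
  rw [← inv_smul_smul₀ hS (esymmOn K S d)]
  exact Submodule.smul_of_tower_mem I _ hsum

lemma esymmOn_mem_of_forall_card_eq {n d : ℕ} (hdn : d ≤ n)
    (hchar : ringChar K = 0 ∨ n < ringChar K)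
    (h : ∀ S : Finset (Fin N), #S = n → esymmOn K S d ∈ I) {S : Finset (Fin N)}
    (hnS : n ≤ #S) (hSn : #S ≤ n + d) : esymmOn K S d ∈ I := by
  obtain ⟨m, hm⟩ := Nat.exists_eq_add_of_le hnS
  induction m generalizing S with
  | zero => exact h S hm
  | succ m ih =>
    refine esymmOn_mem_of_forall_erase_mem I
      (natCast_ne_zero_of_ringChar (by omega) (by omega)) fun u hu => ?_
    have hcard := card_erase_of_mem hu
    exact ih (by omega) (by omega) (by omega)

lemma prod_X_mul_esymmOn_mem {n d : ℕ}
    (h : ∀ S : Finset (Fin N), n ≤ #S → #S ≤ n + d → esymmOn K S d ∈ I) (A : Finset (Fin N)) :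
    ∀ (S : Finset (Fin N)) (k : ℕ), Disjoint A S → #A + k = d → n ≤ #S → #S + #A ≤ n + d →
      (∏ i ∈ A, X i) * esymmOn K S k ∈ I := by
  induction A using Finset.induction_on with
  | empty =>
    intro S k _ hk hnS hSn
    simpa [← hk] using h S hnS (by simpa using hSn)
  | insert a A haA ih =>
    intro S k hAS hk hnS hSn
    rw [disjoint_insert_left] at hAS
    rw [card_insert_of_notMem haA] at hk hSn
    have hstep : (∏ i ∈ insert a A, X i) * esymmOn K S k
        = (∏ i ∈ A, X i) * esymmOn K (insert a S) (k + 1)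
          - (∏ i ∈ A, X i) * esymmOn K S (k + 1) := by
      rw [prod_insert haA, esymmOn_insert hAS.1]
      ring
    have hcard := card_insert_of_notMem hAS.1
    rw [hstep]
    have hAaS : Disjoint A (insert a S) := disjoint_insert_right.2 ⟨haA, hAS.2⟩
    exact I.sub_mem (ih _ _ hAaS (by omega) (by omega) (by omega))
      (ih _ _ hAS.2 (by omega) hnS (by omega))

end Membership

theorem orbit_ideal_esymm_eq_orbit_ideal_monomial_general (K : Type*) [Field K] (n d N : ℕ)
    (hdn : d ≤ n) (hN : n + d ≤ N)
    (hchar : ringChar K = 0 ∨ n < ringChar K) :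
    symOrbitIdeal (esymmOn K (Finset.univ.filter (fun i : Fin N => (i : ℕ) < n)) d)
      = symOrbitIdeal (∏ i ∈ Finset.univ.filter (fun i : Fin N => (i : ℕ) < d), X i) := by
  set Sn := Finset.univ.filter (fun i : Fin N => (i : ℕ) < n)
  set Sd := Finset.univ.filter (fun i : Fin N => (i : ℕ) < d)
  have hSn : #Sn = n := by rw [Fin.card_filter_val_lt]; omega
  have hSd : #Sd = d := by rw [Fin.card_filter_val_lt]; omega
  apply le_antisymm
  · rw [symOrbitIdeal_le_iff, esymmOn]
    exact Ideal.sum_mem _ fun T hT =>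
      prod_X_mem_symOrbitIdeal (hSd.trans (mem_powersetCard.1 hT).2.symm)
  · rw [symOrbitIdeal_le_iff]
    obtain ⟨S, hSSd, hS⟩ := exists_subset_card_eq (s := Sdᶜ) (n := n)
      (by rw [card_compl, hSd, Fintype.card_fin]; omega)
    have hesymm := fun T => esymmOn_mem_of_forall_card_eq (S := T) _ hdn hchar
      (fun T hT => esymmOn_mem_symOrbitIdeal (hSn.trans hT.symm) d)
    have hmem := prod_X_mul_esymmOn_mem _ hesymm Sd S 0
      (disjoint_of_subset_right hSSd disjoint_compl_right) (by omega) hS.ge (by omega)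
    rwa [esymmOn_zero, mul_one] at hmem

/-- If `char K = 0` or `char K > n`, `1 ≤ d ≤ n` and `N ≥ n + d`, then the ideal generated
by the `S_N`-orbit of `e_d(x_1, …, x_n)` equals the ideal generated by the `S_N`-orbit of
the monomial `x_1 x_2 ⋯ x_d`. -/
theorem orbit_ideal_esymm_eq_orbit_ideal_monomial (K : Type*) [Field K] (n d N : ℕ)
    (hd : 1 ≤ d) (hdn : d ≤ n) (hN : n + d ≤ N)
    (hchar : ringChar K = 0 ∨ n < ringChar K) :
    symOrbitIdeal (esymmOn K (Finset.univ.filter (fun i : Fin N => (i : ℕ) < n)) d)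
      = symOrbitIdeal (∏ i ∈ Finset.univ.filter (fun i : Fin N => (i : ℕ) < d), X i) :=
  orbit_ideal_esymm_eq_orbit_ideal_monomial_general K n d N hdn hN hchar
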